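/- arXiv:1812.04874 — 2 statements merged into one kernel-verified Lean document; each statement's English description precedes it below -/
import Mathlib

section
/- Let f ∈ ℝ[x₁,…,xₙ] and X ⊆ ℝⁿ be compact and convex, R = max{|x| : x ∈ X}, and m ≤ min{f(x) : x ∈ X}. Then for any D > D_n(f,R) and any ξ ∈ ℝⁿ, the function φ_ξ(x) = e^{|x-ξ|²} (f(x) - m + D) is strongly convex on X. -/
/-!
Strong convexity can be tested on segments. Along `s ↦ x + s v`, the function is `e^q h` with
`q(s) = ‖x + s v - ξ‖²` and `h(s) = f(x + s v) - m + D ≥ D`, and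
`(e^q h)'' = e^q ((q'² + 2‖v‖²) h + 2 q' h' + h'')`. Expanding `f` into monomials, each a product of
affine factors bounded by `R` on `X`, gives `|h'| ≤ D_n ‖v‖` and `|h''| ≤ D_n ‖v‖²`. Completing the
square, `q'² h + 2 q' h' ≥ -h'² / h ≥ -D_n ‖v‖²`, so with `e^q ≥ 1` the second derivative is at
least `2 (D - D_n) ‖v‖²`: the function is `2 (D - D_n)`-strongly convex.
-/

open Real Set MvPolynomial

/-- The degree `|ν|` of a multi-index. -/
noncomputable def mdeg {n : ℕ} (ν : Fin n →₀ ℕ) : ℕ := ν.sum fun _ e => e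

/-- `D_n(f,R) = max {1, Σ j|a_ν|R^{j-1}, Σ j(j-1)|a_ν|R^{j-2}}`. -/
noncomputable def Dn {n : ℕ} (f : MvPolynomial (Fin n) ℝ) (R : ℝ) : ℝ :=
  max 1 (max
    (∑ ν ∈ f.support, (mdeg ν : ℝ) * |f.coeff ν| * R ^ (mdeg ν - 1))
    (∑ ν ∈ f.support, (mdeg ν : ℝ) * ((mdeg ν : ℝ) - 1) * |f.coeff ν| * R ^ (mdeg ν - 2)))

open Polynomial

/-- `Q` is controlled at `t` like a product of `d` affine factors of size at most `R` and slope at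
most `V`. The derivative bounds are multiplied by powers of `R` so that they are stable under
products without the truncated exponents `d - 1` and `d - 2`. -/
structure Polynomial.DerivBoundsAt (Q : ℝ[X]) (t R V : ℝ) (d : ℕ) : Prop where
  abs_eval_le : |Q.eval t| ≤ R ^ d
  abs_derivative_eval_mul_le : |Q.derivative.eval t| * R ≤ d * V * R ^ d
  abs_derivative_derivative_eval_mul_le :
    |Q.derivative.derivative.eval t| * R ^ 2 ≤ d * (d - 1) * V ^ 2 * R ^ d

namespace Polynomial.DerivBoundsAt

variable {t R V : ℝ}

lemma one : DerivBoundsAt 1 t R V 0 := by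
  constructor <;> simp

lemma C_add_C_mul_X (hR : 0 ≤ R) {a b : ℝ} (ha : |a + b * t| ≤ R) (hb : |b| ≤ V) :
    DerivBoundsAt (C a + C b * X) t R V 1 := by
  constructor
  · simpa using ha
  · simpa using mul_le_mul_of_nonneg_right hb hR
  · simp

lemma mul {A B : ℝ[X]} {p q : ℕ} (hR : 0 ≤ R)
    (hA : DerivBoundsAt A t R V p) (hB : DerivBoundsAt B t R V q) :
    DerivBoundsAt (A * B) t R V (p + q) := by
  obtain ⟨hA₀, hA₁, hA₂⟩ := hA
  obtain ⟨hB₀, hB₁, hB₂⟩ := hB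
  have hpV : 0 ≤ p * V * R ^ p := (by positivity : 0 ≤ |A.derivative.eval t| * R).trans hA₁
  have hpV₂ : 0 ≤ p * (p - 1) * V ^ 2 * R ^ p :=
    (by positivity : 0 ≤ |A.derivative.derivative.eval t| * R ^ 2).trans hA₂
  constructor
  · rw [eval_mul, abs_mul, pow_add]
    exact mul_le_mul hA₀ hB₀ (abs_nonneg _) (by positivity)
  · calc |(A * B).derivative.eval t| * R
        ≤ (|A.derivative.eval t| * |B.eval t| + |A.eval t| * |B.derivative.eval t|) * R := by
          gcongr
          rw [derivative_mul, eval_add, eval_mul, eval_mul, ← abs_mul, ← abs_mul]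
          exact abs_add_le _ _
      _ = (|A.derivative.eval t| * R) * |B.eval t| + |A.eval t| * (|B.derivative.eval t| * R) := by
          ring
      _ ≤ (p * V * R ^ p) * R ^ q + R ^ p * (q * V * R ^ q) := by
          gcongr
      _ = (p + q : ℕ) * V * R ^ (p + q) := by
          push_cast; ring
  · calc |(A * B).derivative.derivative.eval t| * R ^ 2
        ≤ (|A.derivative.derivative.eval t| * |B.eval t|
            + 2 * (|A.derivative.eval t| * |B.derivative.eval t|)
            + |A.eval t| * |B.derivative.derivative.eval t|) * R ^ 2 := by
          gcongr
          simp only [derivative_mul, derivative_add, eval_add, eval_mul]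
          rw [← abs_mul, ← abs_mul, ← abs_mul, two_mul]
          exact (abs_add_le _ _).trans (add_le_add (abs_add_le _ _) (abs_add_le _ _)) |>.trans_eq
            (by ring)
      _ = (|A.derivative.derivative.eval t| * R ^ 2) * |B.eval t|
            + 2 * ((|A.derivative.eval t| * R) * (|B.derivative.eval t| * R))
            + |A.eval t| * (|B.derivative.derivative.eval t| * R ^ 2) := by
          ring
      _ ≤ (p * (p - 1) * V ^ 2 * R ^ p) * R ^ q + 2 * ((p * V * R ^ p) * (q * V * R ^ q))
            + R ^ p * (q * (q - 1) * V ^ 2 * R ^ q) := by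
          gcongr
      _ = (p + q : ℕ) * ((p + q : ℕ) - 1) * V ^ 2 * R ^ (p + q) := by
          push_cast; ring

lemma pow {A : ℝ[X]} (hR : 0 ≤ R) (hA : DerivBoundsAt A t R V 1) (e : ℕ) :
    DerivBoundsAt (A ^ e) t R V e := by
  induction e with
  | zero => simpa using one
  | succ k ih => simpa only [pow_succ] using ih.mul hR hA

lemma prod {ι : Type*} (s : Finset ι) {Q : ι → ℝ[X]} {d : ι → ℕ} (hR : 0 ≤ R)
    (hQ : ∀ i ∈ s, DerivBoundsAt (Q i) t R V (d i)) :
    DerivBoundsAt (∏ i ∈ s, Q i) t R V (∑ i ∈ s, d i) := by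
  classical
  induction s using Finset.induction_on with
  | empty => simpa using one
  | insert i s hi ih =>
    rw [Finset.prod_insert hi, Finset.sum_insert hi]
    exact (hQ i (Finset.mem_insert_self i s)).mul hR
      (ih fun j hj => hQ j (Finset.mem_insert_of_mem hj))

lemma abs_derivative_eval_le {Q : ℝ[X]} {d : ℕ} (h : DerivBoundsAt Q t R V d) (hR : 0 < R) :
    |Q.derivative.eval t| ≤ d * R ^ (d - 1) * V := by
  have hd : (d : ℝ) * V * R ^ d = d * R ^ (d - 1) * V * R := by
    rcases d with _ | d
    · simp
    · simp only [Nat.add_sub_cancel, pow_succ]; ring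
  exact le_of_mul_le_mul_right (h.abs_derivative_eval_mul_le.trans_eq hd) hR

lemma abs_derivative_derivative_eval_le {Q : ℝ[X]} {d : ℕ} (h : DerivBoundsAt Q t R V d)
    (hR : 0 < R) :
    |Q.derivative.derivative.eval t| ≤ d * (d - 1) * R ^ (d - 2) * V ^ 2 := by
  have hd : (d : ℝ) * (d - 1) * V ^ 2 * R ^ d = d * (d - 1) * R ^ (d - 2) * V ^ 2 * R ^ 2 := by
    rcases d with _ | _ | d
    · simp
    · simp
    · rw [show d + 1 + 1 - 2 = d by omega, pow_succ, pow_succ]; ring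
  exact le_of_mul_le_mul_right (h.abs_derivative_derivative_eval_mul_le.trans_eq hd)
    (by positivity)

end Polynomial.DerivBoundsAt

namespace MvPolynomial

variable {σ : Type*}

noncomputable def restrictToLine (f : MvPolynomial σ ℝ) (x v : σ → ℝ) : ℝ[X] :=
  aeval (fun i => Polynomial.C (x i) + Polynomial.C (v i) * Polynomial.X) f

lemma eval_restrictToLine (f : MvPolynomial σ ℝ) (x v : σ → ℝ) (s : ℝ) :
    (f.restrictToLine x v).eval s = eval (x + s • v) f := by
  rw [restrictToLine, ← Polynomial.coe_aeval_eq_eval, comp_aeval_apply, aeval_eq_eval]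
  congr 2 with i
  simp only [Polynomial.coe_aeval_eq_eval, Polynomial.eval_add, Polynomial.eval_mul,
    Polynomial.eval_C, Polynomial.eval_X, Pi.add_apply, Pi.smul_apply, smul_eq_mul]
  ring

lemma restrictToLine_eq_sum (f : MvPolynomial σ ℝ) (x v : σ → ℝ) :
    f.restrictToLine x v =
      ∑ ν ∈ f.support, Polynomial.C (f.coeff ν) *
        ∏ i ∈ ν.support, (Polynomial.C (x i) + Polynomial.C (v i) * Polynomial.X) ^ ν i := by
  rw [restrictToLine, aeval_def, eval₂_eq, Polynomial.algebraMap_eq]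

end MvPolynomial

noncomputable def Dn₁ {n : ℕ} (f : MvPolynomial (Fin n) ℝ) (R : ℝ) : ℝ :=
  ∑ ν ∈ f.support, (mdeg ν : ℝ) * |f.coeff ν| * R ^ (mdeg ν - 1)

noncomputable def Dn₂ {n : ℕ} (f : MvPolynomial (Fin n) ℝ) (R : ℝ) : ℝ :=
  ∑ ν ∈ f.support, (mdeg ν : ℝ) * ((mdeg ν : ℝ) - 1) * |f.coeff ν| * R ^ (mdeg ν - 2)

section LineBounds

variable {n : ℕ} {t R V : ℝ} {x v : Fin n → ℝ}

lemma one_le_Dn (f : MvPolynomial (Fin n) ℝ) (R : ℝ) : 1 ≤ Dn f R := le_max_left _ _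

lemma Dn₁_le_Dn (f : MvPolynomial (Fin n) ℝ) (R : ℝ) : Dn₁ f R ≤ Dn f R :=
  (le_max_left _ _).trans (le_max_right _ _)

lemma Dn₂_le_Dn (f : MvPolynomial (Fin n) ℝ) (R : ℝ) : Dn₂ f R ≤ Dn f R :=
  (le_max_right _ _).trans (le_max_right _ _)

lemma derivBoundsAt_prod_linear_pow (hR : 0 ≤ R) (hx : ∀ i, |x i + v i * t| ≤ R)
    (hv : ∀ i, |v i| ≤ V) (ν : Fin n →₀ ℕ) :
    (∏ i ∈ ν.support, (Polynomial.C (x i) + Polynomial.C (v i) * Polynomial.X) ^ ν i).DerivBoundsAt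
      t R V (mdeg ν) :=
  DerivBoundsAt.prod _ hR fun i _ => (DerivBoundsAt.C_add_C_mul_X hR (hx i) (hv i)).pow hR _

lemma abs_derivative_restrictToLine_eval_le (f : MvPolynomial (Fin n) ℝ) (hR : 0 < R)
    (hx : ∀ i, |x i + v i * t| ≤ R) (hv : ∀ i, |v i| ≤ V) :
    |(f.restrictToLine x v).derivative.eval t| ≤ Dn₁ f R * V := by
  rw [restrictToLine_eq_sum, derivative_sum, eval_finsetSum, Dn₁, Finset.sum_mul]
  refine (Finset.abs_sum_le_sum_abs _ _).trans (Finset.sum_le_sum fun ν _ => ?_)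
  rw [derivative_C_mul, eval_C_mul, abs_mul]
  have hν := (derivBoundsAt_prod_linear_pow hR.le hx hv ν).abs_derivative_eval_le hR
  exact (mul_le_mul_of_nonneg_left hν (abs_nonneg _)).trans_eq (by ring)

lemma abs_derivative_derivative_restrictToLine_eval_le (f : MvPolynomial (Fin n) ℝ) (hR : 0 < R)
    (hx : ∀ i, |x i + v i * t| ≤ R) (hv : ∀ i, |v i| ≤ V) :
    |(f.restrictToLine x v).derivative.derivative.eval t| ≤ Dn₂ f R * V ^ 2 := by
  rw [restrictToLine_eq_sum, derivative_sum, derivative_sum, eval_finsetSum, Dn₂, Finset.sum_mul]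
  refine (Finset.abs_sum_le_sum_abs _ _).trans (Finset.sum_le_sum fun ν _ => ?_)
  rw [derivative_C_mul, derivative_C_mul, eval_C_mul, abs_mul]
  have hν := (derivBoundsAt_prod_linear_pow hR.le hx hv ν).abs_derivative_derivative_eval_le hR
  exact (mul_le_mul_of_nonneg_left hν (abs_nonneg _)).trans_eq (by ring)

lemma abs_derivatives_restrictToLine_eval_le (f : MvPolynomial (Fin n) ℝ) (hR : 0 < R)
    {x v : EuclideanSpace ℝ (Fin n)} (hxv : ‖x + t • v‖ ≤ R) :
    |(f.restrictToLine (fun i => x i) (fun i => v i)).derivative.eval t| ≤ Dn f R * ‖v‖ ∧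
      |(f.restrictToLine (fun i => x i) (fun i => v i)).derivative.derivative.eval t| ≤
        Dn f R * ‖v‖ ^ 2 := by
  have hx (i : Fin n) : |x i + v i * t| ≤ R := by
    simpa [mul_comm] using (PiLp.norm_apply_le (x + t • v) i).trans hxv
  have hv (i : Fin n) : |v i| ≤ ‖v‖ := by simpa using PiLp.norm_apply_le v i
  exact ⟨(abs_derivative_restrictToLine_eval_le f hR hx hv).trans (by gcongr; exact Dn₁_le_Dn f R),
    (abs_derivative_derivative_restrictToLine_eval_le f hR hx hv).trans
      (by gcongr; exact Dn₂_le_Dn f R)⟩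

end LineBounds

lemma strongConvexOn_of_hasDerivAt2_ge {D : Set ℝ} (hD : Convex ℝ D) {g g' g'' : ℝ → ℝ} {k : ℝ}
    (hg : ∀ s ∈ D, HasDerivAt g (g' s) s) (hg' : ∀ s ∈ D, HasDerivAt g' (g'' s) s)
    (hk : ∀ s ∈ D, k ≤ g'' s) : StrongConvexOn D k g := by
  simp only [strongConvexOn_iff_convex, Real.norm_eq_abs, sq_abs]
  have hsq (s : ℝ) : HasDerivAt (fun u => k / 2 * u ^ 2) (k * s) s :=
    ((hasDerivAt_pow 2 s).const_mul (k / 2)).congr_deriv (by push_cast; ring)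
  refine convexOn_of_hasDerivWithinAt2_nonneg hD (f' := fun s => g' s - k * s)
    (f'' := fun s => g'' s - k) ?_ ?_ ?_ ?_
  · exact fun s hs => ((hg s hs).sub (hsq s)).continuousAt.continuousWithinAt
  · exact fun s hs => ((hg s (interior_subset hs)).sub (hsq s)).hasDerivWithinAt
  · exact fun s hs => (((hg' s (interior_subset hs)).sub
      ((hasDerivAt_id s).const_mul k)).hasDerivWithinAt).congr_deriv (by simp)
  · exact fun s hs => sub_nonneg.2 (hk s (interior_subset hs))

lemma strongConvexOn_of_forall_segment {E : Type*} [NormedAddCommGroup E] [NormedSpace ℝ E]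
    {s : Set E} {f : E → ℝ} {m : ℝ} (hs : Convex ℝ s)
    (h : ∀ x ∈ s, ∀ y ∈ s,
      StrongConvexOn (Icc (0 : ℝ) 1) (m * ‖y - x‖ ^ 2) fun t => f (x + t • (y - x))) :
    StrongConvexOn s m f := by
  refine ⟨hs, fun x hx y hy a b ha hb hab => ?_⟩
  have key := (h x hx y hy).2 (left_mem_Icc.2 zero_le_one) (right_mem_Icc.2 zero_le_one) ha hb hab
  have hxy : a • x + b • y = x + b • (y - x) := by
    rw [show a = 1 - b by linarith]; module
  simp only [smul_eq_mul, mul_zero, mul_one, zero_add, zero_smul, one_smul, add_zero,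
    add_sub_cancel, zero_sub, norm_neg, norm_one, one_pow] at key ⊢
  rw [hxy, norm_sub_rev]
  linarith

lemma Set.Subsingleton.strongConvexOn {E : Type*} [NormedAddCommGroup E] [NormedSpace ℝ E]
    {s : Set E} (hs : s.Subsingleton) (m : ℝ) (f : E → ℝ) : StrongConvexOn s m f := by
  refine ⟨hs.convex, fun x hx y hy a b _ _ hab => ?_⟩
  obtain rfl := hs hx hy
  simp [← add_smul, ← add_mul, hab]

lemma strongConvexOn_exp_mul {D : Set ℝ} (hD : Convex ℝ D) {q q' q'' h h' h'' : ℝ → ℝ} {k : ℝ}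
    (hq : ∀ s ∈ D, HasDerivAt q (q' s) s) (hq' : ∀ s ∈ D, HasDerivAt q' (q'' s) s)
    (hh : ∀ s ∈ D, HasDerivAt h (h' s) s) (hh' : ∀ s ∈ D, HasDerivAt h' (h'' s) s)
    (hk : ∀ s ∈ D, k ≤ exp (q s) * ((q' s ^ 2 + q'' s) * h s + 2 * q' s * h' s + h'' s)) :
    StrongConvexOn D k fun s => exp (q s) * h s := by
  refine strongConvexOn_of_hasDerivAt2_ge hD (g' := fun s => exp (q s) * (q' s * h s + h' s))
    (fun s hs => ?_) (fun s hs => ?_) hk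
  · exact ((hq s hs).exp.mul (hh s hs)).congr_deriv (by ring)
  · have hin : HasDerivAt (fun u => q' u * h u + h' u) (q'' s * h s + q' s * h' s + h'' s) s :=
      ((hq' s hs).mul (hh s hs)).add (hh' s hs)
    exact ((hq s hs).exp.mul hin).congr_deriv (by ring)

lemma two_mul_sub_mul_sq_le_of_abs_le {Dn G Q E P₁ P₂ V : ℝ} (hDn : 0 ≤ Dn) (hDnG : Dn ≤ G)
    (hG : 0 < G) (hE : 1 ≤ E) (hP₁ : |P₁| ≤ Dn * V) (hP₂ : |P₂| ≤ Dn * V ^ 2) :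
    2 * (G - Dn) * V ^ 2 ≤ E * ((Q ^ 2 + 2 * V ^ 2) * G + 2 * Q * P₁ + P₂) := by
  -- completing the square: `G (Q² G + 2 Q P₁) = (G Q + P₁)² - P₁² ≥ -Dn G V²`
  have hsq : -(Dn * V ^ 2) ≤ Q ^ 2 * G + 2 * Q * P₁ := by
    have : P₁ ^ 2 ≤ Dn * G * V ^ 2 := by
      nlinarith [sq_abs P₁, abs_nonneg P₁, mul_le_mul_of_nonneg_left hDnG hDn, sq_nonneg V]
    refine le_of_mul_le_mul_right ?_ hG
    nlinarith [sq_nonneg (G * Q + P₁)]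
  have hP₂' : -(Dn * V ^ 2) ≤ P₂ := (neg_le_neg hP₂).trans (neg_abs_le P₂)
  have hbr : 2 * (G - Dn) * V ^ 2 ≤ (Q ^ 2 + 2 * V ^ 2) * G + 2 * Q * P₁ + P₂ := by nlinarith
  exact hbr.trans (le_mul_of_one_le_left ((by nlinarith [sq_nonneg V] : (0:ℝ) ≤ _).trans hbr) hE)

lemma strongConvexOn_Icc_exp_normSq_mul {n : ℕ} {f : MvPolynomial (Fin n) ℝ} {R m D : ℝ}
    (hR : 0 < R) (hD : Dn f R ≤ D) {x y ξ : EuclideanSpace ℝ (Fin n)}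
    (hR_seg : ∀ s ∈ Icc (0 : ℝ) 1, ‖x + s • (y - x)‖ ≤ R)
    (hm_seg : ∀ s ∈ Icc (0 : ℝ) 1, m ≤ MvPolynomial.eval (fun i => (x + s • (y - x)) i) f) :
    StrongConvexOn (Icc (0 : ℝ) 1) (2 * (D - Dn f R) * ‖y - x‖ ^ 2) fun s =>
      exp (‖x + s • (y - x) - ξ‖ ^ 2) *
        (MvPolynomial.eval (fun i => (x + s • (y - x)) i) f - m + D) := by
  set v := y - x
  set P := f.restrictToLine (fun i => x i) (fun i => v i)
  have hcoord (s : ℝ) : (fun i => x i) + s • (fun i => v i) = fun i => (x + s • v) i := by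
    funext i; simp
  have hφ : (fun s : ℝ => exp (‖x + s • v - ξ‖ ^ 2) *
      (MvPolynomial.eval (fun i => (x + s • v) i) f - m + D)) =
      fun s => exp (‖(x - ξ) + s • v‖ ^ 2) * (P.eval s + (D - m)) := by
    funext s
    rw [eval_restrictToLine, hcoord, show x + s • v - ξ = (x - ξ) + s • v by abel]
    ring
  rw [hφ]
  have hline (s : ℝ) : HasDerivAt (fun u : ℝ => (x - ξ) + u • v) v s := by
    simpa using ((hasDerivAt_id s).smul_const v).const_add (x - ξ)
  refine strongConvexOn_exp_mul (convex_Icc 0 1) (q' := fun s => 2 * inner ℝ ((x - ξ) + s • v) v)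
    (q'' := fun _ => 2 * ‖v‖ ^ 2) (h' := fun s => P.derivative.eval s)
    (h'' := fun s => P.derivative.derivative.eval s)
    (fun s _ => (hline s).norm_sq) (fun s _ => ?_) (fun s _ => (P.hasDerivAt s).add_const _)
    (fun s _ => P.derivative.hasDerivAt s) fun s hs => ?_
  · exact (((hline s).inner ℝ (hasDerivAt_const s v)).const_mul 2).congr_deriv (by simp)
  · obtain ⟨hP₁, hP₂⟩ := abs_derivatives_restrictToLine_eval_le f hR (hR_seg s hs)
    have hG : D ≤ P.eval s + (D - m) := by
      have := hm_seg s hs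
      rw [eval_restrictToLine, hcoord]
      linarith
    have hDn := one_le_Dn f R
    calc 2 * (D - Dn f R) * ‖v‖ ^ 2 ≤ 2 * (P.eval s + (D - m) - Dn f R) * ‖v‖ ^ 2 := by gcongr
      _ ≤ _ := two_mul_sub_mul_sq_le_of_abs_le (by linarith) (by linarith) (by linarith)
          (one_le_exp (sq_nonneg _)) hP₁ hP₂

theorem stmt3_general {n : ℕ} (X : Set (EuclideanSpace ℝ (Fin n)))
    (hXcon : Convex ℝ X)
    (f : MvPolynomial (Fin n) ℝ)
    (R : ℝ) (hR : IsGreatest ((fun x => ‖x‖) '' X) R)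
    (m : ℝ) (hmf : ∀ x ∈ X, m ≤ MvPolynomial.eval (fun i => x i) f) :
    ∀ D : ℝ, Dn f R < D → ∀ ξ : EuclideanSpace ℝ (Fin n),
      ∃ μ > 0, StrongConvexOn X μ
        (fun x => Real.exp (‖x - ξ‖ ^ 2) * (MvPolynomial.eval (fun i => x i) f - m + D)) := by
  intro D hD ξ
  obtain ⟨⟨x₀, -, hx₀⟩, hR_ub⟩ := hR
  have hX_le (z : EuclideanSpace ℝ (Fin n)) (hz : z ∈ X) : ‖z‖ ≤ R := hR_ub (mem_image_of_mem _ hz)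
  rcases (hx₀ ▸ norm_nonneg x₀ : 0 ≤ R).eq_or_lt with rfl | hR_pos
  · have hX_zero (z) (hz : z ∈ X) : z = 0 := norm_le_zero_iff.1 (hX_le z hz)
    exact ⟨1, one_pos, Set.Subsingleton.strongConvexOn
      (fun z hz w hw => (hX_zero z hz).trans (hX_zero w hw).symm) _ _⟩
  refine ⟨2 * (D - Dn f R), by linarith, strongConvexOn_of_forall_segment hXcon fun x hx y hy => ?_⟩
  exact strongConvexOn_Icc_exp_normSq_mul hR_pos hD.le
    (fun s hs => hX_le _ (hXcon.add_smul_sub_mem hx hy hs))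
    (fun s hs => hmf _ (hXcon.add_smul_sub_mem hx hy hs))

/-- For a polynomial `f` and a compact convex `X ⊆ ℝⁿ` with
`R = max{|x| : x ∈ X}` and `m ≤ min f(X)`, for any `D > D_n(f,R)` and `ξ ∈ ℝⁿ`,
the function `φ_ξ(x) = e^{|x-ξ|²}(f(x) - m + D)` is strongly convex on `X`. -/
theorem stmt3 {n : ℕ} (X : Set (EuclideanSpace ℝ (Fin n)))
    (hXc : IsCompact X) (hXcon : Convex ℝ X)
    (f : MvPolynomial (Fin n) ℝ)
    (R : ℝ) (hR : IsGreatest ((fun x => ‖x‖) '' X) R)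
    (m : ℝ) (hmf : ∀ x ∈ X, m ≤ MvPolynomial.eval (fun i => x i) f) :
    ∀ D : ℝ, Dn f R < D → ∀ ξ : EuclideanSpace ℝ (Fin n),
      ∃ μ > 0, StrongConvexOn X μ
        (fun x => Real.exp (‖x - ξ‖ ^ 2) * (MvPolynomial.eval (fun i => x i) f - m + D)) :=
  stmt3_general X hXcon f R hR m hmf
end

section
/- Let f : ℝⁿ → ℝ be a C² function and X ⊆ ℝⁿ compact and convex. Suppose m < min{f(x) : x ∈ X} and that all first and second directional derivatives of f in unit directions are bounded by D in absolute value on X. Then for every ξ ∈ ℝⁿ, the function φ_ξ(x) = e^{|x-ξ|²} (f(x) - m + D) is strongly convex on X. -/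
open Real Set

/-! Write `P = f - m + D` and `ε = min_X f - m > 0`. Along a unit direction `β`, with
`a = ∂_β ‖x - ξ‖² = 2 ⟪x - ξ, β⟫`, the second directional derivative of `φ_ξ` is
`e^{‖x - ξ‖²} ((a² + 2) P + 2 a ∂_β f + ∂²_β f)`. Since `P ≥ D + ε` and `|∂_β f|, |∂²_β f| ≤ D`, the
bracket is at least `D (|a| - 1)² + ε (a² + 2) ≥ 2ε`, and the exponential factor is at least `1`.
A lower bound `μ` on all second directional derivatives over a convex set gives `μ`-strong
convexity, by the one-variable second-derivative test along segments. -/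

lemma convexOn_of_convexOn_segment {F : Type*} [AddCommGroup F] [Module ℝ F] {s : Set F}
    {g : F → ℝ} (hs : Convex ℝ s)
    (h : ∀ x ∈ s, ∀ y ∈ s, ConvexOn ℝ (Icc 0 1) fun t : ℝ => g (x + t • (y - x))) :
    ConvexOn ℝ s g := by
  refine ⟨hs, fun x hx y hy a b ha hb hab => ?_⟩
  obtain rfl : a = 1 - b := by linarith
  have := (h x hx y hy).2 (left_mem_Icc.2 zero_le_one) (right_mem_Icc.2 zero_le_one) ha hb hab
  convert this using 2 <;> simp only [smul_eq_mul, mul_zero, mul_one, zero_add, zero_smul,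
    one_smul, add_zero, add_sub_cancel]
  module

section SecondOrder

variable {E : Type*} [NormedAddCommGroup E] [InnerProductSpace ℝ E]

lemma ContDiff.differentiable_fderiv_apply {φ : E → ℝ} (hφ : ContDiff ℝ 2 φ) (v : E) :
    Differentiable ℝ fun y => fderiv ℝ φ y v :=
  ((hφ.fderiv_right (by norm_num)).clm_apply contDiff_const).differentiable one_ne_zero

lemma fderiv_fderiv_apply_smul (φ : E → ℝ) (x v : E) (c : ℝ) :
    fderiv ℝ (fun y => fderiv ℝ φ y (c • v)) x (c • v) =
      c ^ 2 * fderiv ℝ (fun y => fderiv ℝ φ y v) x v := by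
  simp_rw [map_smul]
  rw [show (fun y => c • fderiv ℝ φ y v) = c • fun y => fderiv ℝ φ y v from rfl,
    fderiv_const_smul_field]
  simp only [Pi.smul_apply, smul_apply, smul_eq_mul]
  ring

lemma mul_norm_sq_le_fderiv_fderiv {φ : E → ℝ} {μ : ℝ} {x : E}
    (h : ∀ β : E, ‖β‖ = 1 → μ ≤ fderiv ℝ (fun y => fderiv ℝ φ y β) x β) (v : E) :
    μ * ‖v‖ ^ 2 ≤ fderiv ℝ (fun y => fderiv ℝ φ y v) x v := by
  rcases eq_or_ne v 0 with rfl | hv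
  · simp
  have hunit := h (‖v‖⁻¹ • v) (by
    rw [norm_smul, norm_inv, norm_norm, inv_mul_cancel₀ (norm_ne_zero_iff.2 hv)])
  conv_rhs => rw [← smul_inv_smul₀ (norm_ne_zero_iff.2 hv) v, fderiv_fderiv_apply_smul]
  rw [mul_comm]
  exact mul_le_mul_of_nonneg_left hunit (sq_nonneg _)

theorem strongConvexOn_of_le_fderiv_fderiv {s : Set E} {μ : ℝ} {φ : E → ℝ} (hs : Convex ℝ s)
    (hφ : ContDiff ℝ 2 φ)
    (h : ∀ x ∈ s, ∀ β : E, ‖β‖ = 1 → μ ≤ fderiv ℝ (fun y => fderiv ℝ φ y β) x β) :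
    StrongConvexOn s μ φ := by
  rw [strongConvexOn_iff_convex]
  refine convexOn_of_convexOn_segment hs fun x hx y hy => ?_
  set v := y - x
  have hline (t : ℝ) : HasDerivAt (fun t : ℝ => x + t • v) v t := by
    simpa using ((hasDerivAt_id t).smul_const v).const_add x
  have hd1 (t : ℝ) : HasDerivAt (fun t : ℝ => φ (x + t • v) - μ / 2 * ‖x + t • v‖ ^ 2)
      (fderiv ℝ φ (x + t • v) v - μ * inner ℝ (x + t • v) v) t := by
    refine (((hφ.differentiable two_ne_zero _).hasFDerivAt.comp_hasDerivAt t (hline t)).sub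
      ((hline t).norm_sq.const_mul (μ / 2))).congr_deriv ?_
    ring
  have hd2 (t : ℝ) : HasDerivAt (fun t : ℝ => fderiv ℝ φ (x + t • v) v - μ * inner ℝ (x + t • v) v)
      (fderiv ℝ (fun y => fderiv ℝ φ y v) (x + t • v) v - μ * ‖v‖ ^ 2) t := by
    refine (((hφ.differentiable_fderiv_apply v _).hasFDerivAt.comp_hasDerivAt t (hline t)).sub
      (((hline t).inner ℝ (hasDerivAt_const t v)).const_mul μ)).congr_deriv ?_
    simp
  refine convexOn_of_hasDerivWithinAt2_nonneg (convex_Icc 0 1)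
    (fun t _ => (hd1 t).continuousAt.continuousWithinAt) (fun t _ => (hd1 t).hasDerivWithinAt)
    (fun t _ => (hd2 t).hasDerivWithinAt) fun t ht => ?_
  rw [interior_Icc] at ht
  have hmem : x + t • v ∈ s := by
    simpa [AffineMap.lineMap_apply_module', add_comm] using
      hs.lineMap_mem hx hy ⟨ht.1.le, ht.2.le⟩
  exact sub_nonneg.2 (mul_norm_sq_le_fderiv_fderiv (h _ hmem) v)

lemma fderiv_exp_mul_apply {q p : E → ℝ} (hq : Differentiable ℝ q) (hp : Differentiable ℝ p)
    (y v : E) :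
    fderiv ℝ (fun z => exp (q z) * p z) y v =
      exp (q y) * (fderiv ℝ q y v * p y + fderiv ℝ p y v) := by
  have H : HasFDerivAt (fun z => exp (q z) * p z) _ y :=
    (hq y).hasFDerivAt.exp.mul (hp y).hasFDerivAt
  rw [H.fderiv]
  simp only [add_apply, smul_apply, smul_eq_mul]
  ring

lemma fderiv_fderiv_exp_mul_apply {q p : E → ℝ} (hq : ContDiff ℝ 2 q) (hp : ContDiff ℝ 2 p)
    (x v : E) :
    fderiv ℝ (fun y => fderiv ℝ (fun z => exp (q z) * p z) y v) x v =
      exp (q x) * ((fderiv ℝ q x v ^ 2 + fderiv ℝ (fun y => fderiv ℝ q y v) x v) * p x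
        + 2 * fderiv ℝ q x v * fderiv ℝ p x v + fderiv ℝ (fun y => fderiv ℝ p y v) x v) := by
  have hq₁ := hq.differentiable two_ne_zero
  have hp₁ := hp.differentiable two_ne_zero
  simp_rw [fderiv_exp_mul_apply hq₁ hp₁]
  have H : HasFDerivAt
      (fun y => exp (q y) * (fderiv ℝ q y v * p y + fderiv ℝ p y v)) _ x :=
    (hq₁ x).hasFDerivAt.exp.mul
      ((((hq.differentiable_fderiv_apply v x).hasFDerivAt).mul (hp₁ x).hasFDerivAt).add
        (hp.differentiable_fderiv_apply v x).hasFDerivAt)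
  rw [H.fderiv]
  simp only [add_apply, smul_apply, smul_eq_mul]
  ring

lemma fderiv_norm_sub_sq_apply (ξ y v : E) :
    fderiv ℝ (fun z => ‖z - ξ‖ ^ 2) y v = 2 * inner ℝ (y - ξ) v := by
  have H : HasFDerivAt (fun z => ‖z - ξ‖ ^ 2) _ y := ((hasFDerivAt_id y).sub_const ξ).norm_sq
  rw [H.fderiv]
  simp [inner_sub_left]

lemma fderiv_fderiv_norm_sub_sq_apply (ξ x v : E) :
    fderiv ℝ (fun y => fderiv ℝ (fun z => ‖z - ξ‖ ^ 2) y v) x v = 2 * ‖v‖ ^ 2 := by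
  simp_rw [fderiv_norm_sub_sq_apply]
  have H : HasFDerivAt (fun y => 2 * inner ℝ (y - ξ) v) _ x :=
    (((hasFDerivAt_id x).sub_const ξ).inner ℝ (hasFDerivAt_const v x)).const_mul 2
  rw [H.fderiv]
  simp

end SecondOrder

lemma two_mul_le_of_abs_le {a P P₁ P₂ D ε : ℝ} (hε : 0 ≤ ε) (hP : D + ε ≤ P) (hP₁ : |P₁| ≤ D)
    (hP₂ : |P₂| ≤ D) : 2 * ε ≤ (a ^ 2 + 2) * P + 2 * a * P₁ + P₂ := by
  have hD : 0 ≤ D := (abs_nonneg _).trans hP₁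
  have h₁ : -(2 * |a| * D) ≤ 2 * a * P₁ := by
    have : |2 * a * P₁| ≤ 2 * |a| * D := by
      rw [abs_mul, abs_mul, abs_two]; gcongr
    linarith [neg_abs_le (2 * a * P₁)]
  nlinarith [neg_abs_le P₂, mul_le_mul_of_nonneg_left hP (by positivity : (0:ℝ) ≤ a ^ 2 + 2),
    mul_nonneg hD (sq_nonneg (|a| - 1)), mul_nonneg hε (sq_nonneg a), sq_abs a]

theorem stmt4_general {n : ℕ} (X : Set (EuclideanSpace ℝ (Fin n)))
    (hXc : IsCompact X) (hXcon : Convex ℝ X)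
    (f : EuclideanSpace ℝ (Fin n) → ℝ) (hf : ContDiff ℝ 2 f)
    (m D : ℝ)
    (hmf : ∀ x ∈ X, m < f x)
    (hder : ∀ x ∈ X, ∀ β : EuclideanSpace ℝ (Fin n), ‖β‖ = 1 →
      |fderiv ℝ f x β| ≤ D ∧ |fderiv ℝ (fun y => fderiv ℝ f y β) x β| ≤ D) :
    ∀ ξ : EuclideanSpace ℝ (Fin n),
      ∃ μ > 0, StrongConvexOn X μ
        (fun x => Real.exp (‖x - ξ‖ ^ 2) * (f x - m + D)) := by
  intro ξ
  obtain ⟨c, hmc, hcf⟩ := hXc.exists_forall_le' hf.continuous.continuousOn hmf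
  have hq : ContDiff ℝ 2 fun z : EuclideanSpace ℝ (Fin n) => ‖z - ξ‖ ^ 2 :=
    (contDiff_norm_sq ℝ).comp (contDiff_id.sub contDiff_const)
  have hp : ContDiff ℝ 2 fun z => f z - m + D := (hf.sub contDiff_const).add contDiff_const
  refine ⟨2 * (c - m), by linarith, strongConvexOn_of_le_fderiv_fderiv hXcon (hq.exp.mul hp)
    fun x hx β hβ => ?_⟩
  rw [fderiv_fderiv_exp_mul_apply hq hp, fderiv_norm_sub_sq_apply,
    fderiv_fderiv_norm_sub_sq_apply, hβ]
  simp_rw [fderiv_add_const, fderiv_sub_const]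
  obtain ⟨hf₁, hf₂⟩ := hder x hx β hβ
  have hP : D + (c - m) ≤ f x - m + D := by linarith [hcf x hx]
  rw [one_pow, mul_one]
  have hK := two_mul_le_of_abs_le (a := 2 * inner ℝ (x - ξ) β) (sub_nonneg.2 hmc.le) hP hf₁ hf₂
  exact hK.trans (le_mul_of_one_le_left (by linarith) (one_le_exp (by positivity)))

/-- Let `f : ℝⁿ → ℝ` be `C²`, `X ⊆ ℝⁿ` compact convex,
`m < min f(X)`, and suppose all first and second directional derivatives of `f`
in unit directions are bounded by `D` in absolute value on `X`. Then for every
`ξ ∈ ℝⁿ` the function `φ_ξ(x) = e^{|x-ξ|²}(f(x) - m + D)` is strongly convex on `X`. -/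
theorem stmt4 {n : ℕ} (X : Set (EuclideanSpace ℝ (Fin n)))
    (hXc : IsCompact X) (hXcon : Convex ℝ X)
    (f : EuclideanSpace ℝ (Fin n) → ℝ) (hf : ContDiff ℝ 2 f)
    (m D : ℝ) (hD : 0 < D)
    (hmf : ∀ x ∈ X, m < f x)
    (hder : ∀ x ∈ X, ∀ β : EuclideanSpace ℝ (Fin n), ‖β‖ = 1 →
      |fderiv ℝ f x β| ≤ D ∧ |fderiv ℝ (fun y => fderiv ℝ f y β) x β| ≤ D) :
    ∀ ξ : EuclideanSpace ℝ (Fin n),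
      ∃ μ > 0, StrongConvexOn X μ
        (fun x => Real.exp (‖x - ξ‖ ^ 2) * (f x - m + D)) :=
  stmt4_general X hXc hXcon f hf m D hmf hder
end
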